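/- arXiv:2202.07429 — 8 statements merged into one kernel-verified Lean document; each statement's English description precedes it below -/
import Mathlib

section
/- Let a, b ∈ SL(2,ℂ) with tr(a) = tr(b) = t, and suppose a·b = d(λ) where d(λ) is the diagonal matrix diag(λ, λ⁻¹), with λ + λ⁻¹ ≠ t² - 2 and λ ≠ ±1. Then there exists μ ≠ 0 such that a = h(μ) and b = h(-λ⁻¹μ), where h(μ) is the matrix (1/(λ+1))·[[λt, μ], [δλ/μ, t]] with δ = t² - λ - λ⁻¹ - 2. -/
/-!
Since `det a = 1`, `b = a⁻¹ d(λ) = adj(a) d(λ)`, so the diagonal of `b` is `(a₁₁ λ, a₀₀ λ⁻¹)`.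
The two trace conditions `a₀₀ + a₁₁ = t = a₁₁ λ + a₀₀ λ⁻¹` form a linear system, nondegenerate
because `λ ≠ ±1`, which forces `a₀₀ = λt/(λ+1)` and `a₁₁ = t/(λ+1)`; the determinant then fixes
`a₀₁ a₁₀`. The entry `a₀₁` cannot vanish, since `a₀₀ a₁₁ = 1` would give `λ + λ⁻¹ = t² - 2`.
So `a = h(μ)` with `μ = (λ+1) a₀₁`, and the same description applies to `b`, whose
diagonal satisfies the same two equations.
-/

open Matrix

noncomputable def hMat (t l μ : ℂ) : Matrix (Fin 2) (Fin 2) ℂ :=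
  (l + 1)⁻¹ • !![l * t, μ; (t ^ 2 - l - l⁻¹ - 2) * l * μ⁻¹, t]

namespace Matrix

theorem eq_adjugate_mul_of_mul_eq {n R : Type*} [DecidableEq n] [Fintype n] [CommRing R]
    {a b c : Matrix n n R} (ha : a.det = 1) (hab : a * b = c) : b = a.adjugate * c := by
  rw [← hab, ← Matrix.mul_assoc, adjugate_mul, ha, one_smul, Matrix.one_mul]

theorem adjugate_mul_diagonal_fin_two {R : Type*} [CommRing R] (a : Matrix (Fin 2) (Fin 2) R)
    (x y : R) :
    a.adjugate * !![x, 0; 0, y] = !![a 1 1 * x, -a 0 1 * y; -a 1 0 * x, a 0 0 * y] := by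
  rw [a.eta_fin_two, adjugate_fin_two_of]
  simp

end Matrix

section DiagonalEntries

variable {K : Type*} [Field K] {p s t l : K}

theorem diag_entries_of_traces (hl0 : l ≠ 0) (hl1 : l ≠ 1) (htr : p + s = t)
    (htr' : s * l + p * l⁻¹ = t) : p * (l + 1) = t * l ∧ s * (l + 1) = t := by
  have hs : s * (l + 1) = t := by
    refine mul_right_cancel₀ (sub_ne_zero.mpr hl1) ?_
    field_simp at htr'
    linear_combination htr' - htr
  exact ⟨by linear_combination (l + 1) * htr - hs, hs⟩

theorem add_inv_eq_sq_sub_two_of_mul_eq_one (hl0 : l ≠ 0) (hp : p * (l + 1) = t * l)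
    (hs : s * (l + 1) = t) (hps : p * s = 1) : l + l⁻¹ = t ^ 2 - 2 := by
  field_simp
  linear_combination (s * (l + 1)) * hp + (t * l) * hs - (l + 1) ^ 2 * hps

end DiagonalEntries

theorem eq_hMat_of_diag {a : Matrix (Fin 2) (Fin 2) ℂ} {t l : ℂ} (hl0 : l ≠ 0) (hl : l + 1 ≠ 0)
    (ha : a.det = 1) (hp : a 0 0 * (l + 1) = t * l) (hs : a 1 1 * (l + 1) = t)
    (hq : a 0 1 ≠ 0) : a = hMat t l ((l + 1) * a 0 1) := by
  rw [det_fin_two] at ha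
  ext i j
  fin_cases i <;> fin_cases j <;> simp [hMat] <;> field_simp
  · linear_combination hp
  · linear_combination (a 1 1 * (l + 1)) * hp + (t * l) * hs - (l + 1) ^ 2 * ha
  · exact hs

theorem product_diagonal_form (a b : Matrix (Fin 2) (Fin 2) ℂ) (t l : ℂ)
    (ha : a.det = 1) (hb : b.det = 1) (hta : a.trace = t) (htb : b.trace = t)
    (hl1 : l ≠ 1) (hl2 : l ≠ -1) (hl3 : l + l⁻¹ ≠ t ^ 2 - 2)
    (hab : a * b = !![l, 0; 0, l⁻¹]) :
    ∃ μ : ℂ, μ ≠ 0 ∧ a = hMat t l μ ∧ b = hMat t l (-l⁻¹ * μ) := by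
  have hl : l + 1 ≠ 0 := fun h => hl2 (eq_neg_of_add_eq_zero_left h)
  have hl0 : l ≠ 0 := by
    rintro rfl
    simpa [ha, hb] using congrArg det hab
  have hb_eq : b = !![a 1 1 * l, -a 0 1 * l⁻¹; -a 1 0 * l, a 0 0 * l⁻¹] := by
    rw [eq_adjugate_mul_of_mul_eq ha hab, adjugate_mul_diagonal_fin_two]
  rw [trace_fin_two] at hta
  rw [hb_eq, trace_fin_two_of] at htb
  obtain ⟨hp, hs⟩ := diag_entries_of_traces hl0 hl1 hta htb
  have hq : a 0 1 ≠ 0 := fun hq =>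
    hl3 (add_inv_eq_sq_sub_two_of_mul_eq_one hl0 hp hs (by simpa [det_fin_two, hq] using ha))
  refine ⟨(l + 1) * a 0 1, mul_ne_zero hl hq, eq_hMat_of_diag hl0 hl ha hp hs hq, ?_⟩
  have hb01 : (l + 1) * b 0 1 = -l⁻¹ * ((l + 1) * a 0 1) := by
    simp only [hb_eq, of_apply, cons_val', cons_val_zero, cons_val_one, empty_val',
      cons_val_fin_one]
    ring
  rw [← hb01]
  refine eq_hMat_of_diag hl0 hl hb ?_ ?_ ?_
  · simp only [hb_eq, of_apply, cons_val', cons_val_zero, empty_val', cons_val_fin_one]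
    linear_combination l * hs
  · simp only [hb_eq, of_apply, cons_val', cons_val_one, empty_val', cons_val_fin_one]
    field_simp
    linear_combination hp
  · simp [hb_eq, hq, hl0]
end

section
/- Let a, b ∈ SL(2,ℂ) with tr(a) = tr(b) = t, and suppose a·b = diag(λ, λ⁻¹) where λ + λ⁻¹ = t² - 2 and λ ≠ ±1. Then either both a and b are upper-triangular, or both a and b are lower-triangular. -/
open Matrix

theorem product_diagonal_degenerate (a b : Matrix (Fin 2) (Fin 2) ℂ) (t l : ℂ)
    (ha : a.det = 1) (hb : b.det = 1) (hta : a.trace = t) (htb : b.trace = t)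
    (hl1 : l ≠ 1) (hl2 : l ≠ -1) (hl3 : l + l⁻¹ = t ^ 2 - 2)
    (hab : a * b = !![l, 0; 0, l⁻¹]) :
    (a 1 0 = 0 ∧ b 1 0 = 0) ∨ (a 0 1 = 0 ∧ b 0 1 = 0) := by
  have hdet : l * l⁻¹ = 1 := by
    have h := congrArg Matrix.det hab
    rw [Matrix.det_mul, ha, hb, Matrix.det_fin_two_of] at h
    linear_combination -h
  have hl0 : l ≠ 0 := left_ne_zero_of_mul_eq_one hdet
  have hbinv : b = a⁻¹ * !![l, 0; 0, l⁻¹] := by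
    rw [← hab, ← Matrix.mul_assoc, Matrix.nonsing_inv_mul a (by rw [ha]; exact isUnit_one),
      Matrix.one_mul]
  have hainv : a⁻¹ = !![a 1 1, -(a 0 1); -(a 1 0), a 0 0] := by
    rw [Matrix.inv_def, Matrix.adjugate_fin_two, ha]
    simp
  rw [hainv] at hbinv
  have hb00 : b 0 0 = a 1 1 * l := by
    rw [hbinv]; simp [Matrix.mul_apply, Fin.sum_univ_two]
  have hb01 : b 0 1 = -(a 0 1) * l⁻¹ := by
    rw [hbinv]; simp [Matrix.mul_apply, Fin.sum_univ_two]
  have hb10 : b 1 0 = -(a 1 0) * l := by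
    rw [hbinv]; simp [Matrix.mul_apply, Fin.sum_univ_two]
  have hb11 : b 1 1 = a 0 0 * l⁻¹ := by
    rw [hbinv]; simp [Matrix.mul_apply, Fin.sum_univ_two]
  rw [Matrix.trace_fin_two] at hta htb
  rw [Matrix.det_fin_two] at ha
  rw [hb00, hb11] at htb
  subst hta
  have key1 : (l - 1) * (a 1 1 * l - a 0 0) = 0 := by
    linear_combination l * htb - a 0 0 * hdet
  have hp : a 1 1 * l = a 0 0 := by
    rcases mul_eq_zero.mp key1 with h | h
    · exact absurd (sub_eq_zero.mp h) hl1
    · exact sub_eq_zero.mp h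
  have key2 : (l + 1) ^ 2 * (a 1 1 ^ 2 * l - 1) = 0 := by
    linear_combination (-l) * hl3 + hdet + l * (a 1 1 * l + 2 * a 1 1 + a 0 0) * hp
  have hsq : a 1 1 ^ 2 * l = 1 := by
    rcases mul_eq_zero.mp key2 with h | h
    · exact absurd (by linear_combination (pow_eq_zero_iff (n := 2) (by norm_num)).mp h) hl2
    · linear_combination h
  have hqr : a 0 1 * a 1 0 = 0 := by
    linear_combination -ha + hsq - a 1 1 * hp
  rcases mul_eq_zero.mp hqr with h | h
  · right; exact ⟨h, by rw [hb01, h]; ring⟩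
  · left; exact ⟨h, by rw [hb10, h]; ring⟩
end

section
/- Let a, b ∈ SL(2,ℂ) with tr(a) = tr(b), and suppose a·b = p, where p = [[1,1],[0,1]]. Then both a and b are upper-triangular. -/
open Matrix

theorem product_parabolic (a b : Matrix (Fin 2) (Fin 2) ℂ)
    (ha : a.det = 1) (hb : b.det = 1) (ht : a.trace = b.trace)
    (hab : a * b = !![1, 1; 0, 1]) :
    a 1 0 = 0 ∧ b 1 0 = 0 := by
  rw [Matrix.det_fin_two] at ha
  simp only [Matrix.trace_fin_two] at ht
  have e1 := congrFun (congrFun hab 0) 0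
  have e2 := congrFun (congrFun hab 0) 1
  have e3 := congrFun (congrFun hab 1) 0
  have e4 := congrFun (congrFun hab 1) 1
  simp [Matrix.mul_apply, Fin.sum_univ_two] at e1 e2 e3 e4
  have hb10 : b 1 0 = -(a 1 0) := by
    linear_combination a 0 0 * e3 - a 1 0 * e1 - b 1 0 * ha
  have hb00 : b 0 0 = a 1 1 := by
    linear_combination a 1 1 * e1 - a 0 1 * e3 - b 0 0 * ha
  have hb11 : b 1 1 = a 0 0 - a 1 0 := by
    linear_combination a 0 0 * e4 - a 1 0 * e2 - b 1 1 * ha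
  have h10 : a 1 0 = 0 := by
    linear_combination ht + hb00 + hb11
  exact ⟨h10, by rw [hb10, h10, neg_zero]⟩
end

section
/- Let a₁, a₂ ∈ SL(2,ℂ) with traces t₁, t₂, let λ ∈ ℂ with λ ≠ ±1, and set δᵢ = tᵢ² - λ - λ⁻¹ - 2 for i = 1, 2, assuming δ₁ ≠ 0 and δ₂ ≠ 0. Then the commutator a₁a₂a₁⁻¹a₂⁻¹ equals diag(λ, λ⁻¹) if and only if there exist nonzero μ, ν ∈ ℂ with a₁ = h_{t₁}^λ(μ), a₂⁻¹ = h_{t₂}^λ(ν), and (λ-1)t₁t₂ = λδ₁νμ⁻¹ - δ₂μν⁻¹. -/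
/-!
Put `b = a₂⁻¹` and `D = diag(λ, λ⁻¹)`. The identity `a₁ b⁻¹ a₁⁻¹ b = D` exhibits `D b⁻¹` as a
conjugate of `b⁻¹` and `a₁⁻¹ D` as a conjugate of `a₁⁻¹`, so `tr (D a₁⁻¹) = tr a₁⁻¹` and
`tr (D b⁻¹) = tr b⁻¹`. As `λ ≠ 1`, these say that the diagonals of `a₁` and `b` are in ratio `λ : 1`,
and a determinant-one matrix of trace `t` with such a diagonal is `h_t^λ(μ)`, where `μ` is `λ + 1`
times its upper right entry; that entry is nonzero because `δ ≠ 0`. For two matrices of this shape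
the commutator equation collapses to one scalar equation, the stated relation.
-/

open Matrix

namespace Matrix

variable {n R : Type*} [Fintype n] [DecidableEq n] [CommRing R]

theorem commutator_eq_iff_mul_eq_mul {g h D : Matrix n n R} (hg : IsUnit g.det)
    (hh : IsUnit h.det) : g * h * g⁻¹ * h⁻¹ = D ↔ g * h = D * (h * g) := by
  constructor
  · rintro rfl
    rw [← Matrix.mul_assoc, nonsing_inv_mul_cancel_right _ _ hh,
      nonsing_inv_mul_cancel_right _ _ hg]
  · intro H
    rw [H, ← Matrix.mul_assoc, mul_nonsing_inv_cancel_right _ _ hg,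
      mul_nonsing_inv_cancel_right _ _ hh]

theorem trace_mul_eq_of_commutator_eq {g h D : Matrix n n R} (hg : IsUnit g.det)
    (hh : IsUnit h.det) (H : g * h * g⁻¹ * h⁻¹ = D) : trace (D * h) = trace h := by
  rw [← H, nonsing_inv_mul_cancel_right _ _ hh, trace_conj ((isUnit_iff_isUnit_det g).2 hg)]

theorem trace_mul_inv_eq_of_commutator_eq {g h D : Matrix n n R} (hg : IsUnit g.det)
    (hh : IsUnit h.det) (H : g * h * g⁻¹ * h⁻¹ = D) : trace (D * g⁻¹) = trace g⁻¹ := by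
  have : h * g⁻¹ * h⁻¹ = g⁻¹ * D := by
    rw [← H, Matrix.mul_assoc g, Matrix.mul_assoc g, nonsing_inv_mul_cancel_left _ _ hg,
      Matrix.mul_assoc]
  rw [trace_mul_comm, ← this, trace_conj ((isUnit_iff_isUnit_det h).2 hh)]

theorem inv_fin_two_of_det_eq_one {A : Matrix (Fin 2) (Fin 2) R} (hA : A.det = 1) :
    A⁻¹ = !![A 1 1, -A 0 1; -A 1 0, A 0 0] := by
  rw [inv_def, hA, Ring.inverse_one, one_smul, adjugate_fin_two]

end Matrix

theorem apply_zero_zero_eq_of_trace_diag_mul_inv {K : Type*} [Field K]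
    {N : Matrix (Fin 2) (Fin 2) K} {l : K}
    (hl0 : l ≠ 0) (hl1 : l ≠ 1) (hN : N.det = 1)
    (h : trace (!![l, 0; 0, l⁻¹] * N⁻¹) = trace N⁻¹) : N 0 0 = l * N 1 1 := by
  rw [inv_fin_two_of_det_eq_one hN, mul_fin_two, trace_fin_two_of, trace_fin_two_of] at h
  have : (l - 1) * (N 0 0 - l * N 1 1) = 0 := by
    field_simp at h
    linear_combination -h
  exact sub_eq_zero.1 ((mul_eq_zero.1 this).resolve_left (sub_ne_zero.2 hl1))

section hMat

variable {t l μ : ℂ}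

theorem det_hMat (hl0 : l ≠ 0) (hl : l + 1 ≠ 0) (hμ : μ ≠ 0) : (hMat t l μ).det = 1 := by
  rw [hMat, det_smul, det_fin_two_of, Fintype.card_fin]
  field_simp
  ring

theorem inv_hMat (hl0 : l ≠ 0) (hl : l + 1 ≠ 0) (hμ : μ ≠ 0) :
    (hMat t l μ)⁻¹ = (l + 1)⁻¹ • !![t, -μ; -((t ^ 2 - l - l⁻¹ - 2) * l * μ⁻¹), l * t] := by
  rw [inv_fin_two_of_det_eq_one (det_hMat hl0 hl hμ)]
  ext i j
  fin_cases i <;> fin_cases j <;> simp [hMat]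

theorem exists_eq_hMat {M : Matrix (Fin 2) (Fin 2) ℂ} (hl0 : l ≠ 0) (hl : l + 1 ≠ 0)
    (hδ : t ^ 2 - l - l⁻¹ - 2 ≠ 0) (hdet : M.det = 1) (htr : M.trace = t)
    (hM : M 0 0 = l * M 1 1) : ∃ μ ≠ 0, M = hMat t l μ := by
  rw [det_fin_two] at hdet
  rw [trace_fin_two] at htr
  have hd : M 1 1 = (l + 1)⁻¹ * t := by
    field_simp
    linear_combination htr - hM
  have hb : M 0 1 ≠ 0 := by
    intro hb
    apply hδ
    rw [hb, hM, hd] at hdet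
    field_simp at hdet ⊢
    linear_combination hdet
  refine ⟨(l + 1) * M 0 1, mul_ne_zero hl hb, ?_⟩
  ext i j
  fin_cases i <;> fin_cases j <;>
    simp only [hMat, Fin.isValue, Fin.zero_eta, Fin.mk_one, _root_.mul_inv_rev, Matrix.smul_apply,
      of_apply, cons_val', cons_val_zero, cons_val_one, cons_val_fin_one, smul_eq_mul]
  · rw [hM, hd]; field_simp
  · field_simp
  · rw [hM, hd] at hdet
    field_simp at hdet ⊢
    linear_combination -hdet
  · rw [hd]

end hMat

theorem hMat_commutator_eq_diag_iff {t₁ t₂ l μ ν : ℂ} (hl0 : l ≠ 0) (hl : l + 1 ≠ 0)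
    (hμ : μ ≠ 0) (hν : ν ≠ 0) :
    hMat t₁ l μ * (hMat t₂ l ν)⁻¹ * (hMat t₁ l μ)⁻¹ * hMat t₂ l ν = !![l, 0; 0, l⁻¹] ↔
      (l - 1) * t₁ * t₂ =
        l * (t₁ ^ 2 - l - l⁻¹ - 2) * μ⁻¹ * ν - (t₂ ^ 2 - l - l⁻¹ - 2) * μ * ν⁻¹ := by
  have hdet₁ : IsUnit (hMat t₁ l μ).det := (det_hMat hl0 hl hμ).symm ▸ isUnit_one
  have hdet₂ : IsUnit (hMat t₂ l ν).det := (det_hMat hl0 hl hν).symm ▸ isUnit_one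
  have h := commutator_eq_iff_mul_eq_mul (D := !![l, 0; 0, l⁻¹]) hdet₁
    (isUnit_nonsing_inv_det_iff.2 hdet₂)
  rw [nonsing_inv_nonsing_inv _ hdet₂] at h
  rw [h, inv_hMat hl0 hl hν, hMat]
  simp only [Matrix.smul_mul, Matrix.mul_smul, smul_smul,
    smul_right_inj (mul_ne_zero (inv_ne_zero hl) (inv_ne_zero hl))]
  rw [mul_fin_two, mul_fin_two, mul_fin_two]
  simp only [mul_neg, neg_mul, zero_mul, add_zero, zero_add, EmbeddingLike.apply_eq_iff_eq,
    vecCons_inj, and_true]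
  -- the off-diagonal entries agree identically; each diagonal entry is the relation
  refine ⟨fun H => ?_, fun H => ⟨⟨?_, by ring⟩, by field_simp; ring, ?_⟩⟩
  · have := H.1.1
    field_simp at this ⊢
    linear_combination -this
  · field_simp at H ⊢
    linear_combination -H
  · field_simp at H ⊢
    linear_combination H

theorem commutator_diagonal_iff (a₁ a₂ : Matrix (Fin 2) (Fin 2) ℂ) (t₁ t₂ l : ℂ)
    (ha₁ : a₁.det = 1) (ha₂ : a₂.det = 1) (ht₁ : a₁.trace = t₁) (ht₂ : a₂.trace = t₂)
    (hl1 : l ≠ 1) (hl2 : l ≠ -1)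
    (hδ₁ : t₁ ^ 2 - l - l⁻¹ - 2 ≠ 0) (hδ₂ : t₂ ^ 2 - l - l⁻¹ - 2 ≠ 0) :
    a₁ * a₂ * a₁⁻¹ * a₂⁻¹ = !![l, 0; 0, l⁻¹] ↔
      ∃ μ ν : ℂ, μ ≠ 0 ∧ ν ≠ 0 ∧ a₁ = hMat t₁ l μ ∧ a₂⁻¹ = hMat t₂ l ν ∧
        (l - 1) * t₁ * t₂ =
          l * (t₁ ^ 2 - l - l⁻¹ - 2) * μ⁻¹ * ν - (t₂ ^ 2 - l - l⁻¹ - 2) * μ * ν⁻¹ := by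
  have hl : l + 1 ≠ 0 := fun h => hl2 (eq_neg_of_add_eq_zero_left h)
  have hu₁ : IsUnit a₁.det := ha₁ ▸ isUnit_one
  have hu₂ : IsUnit a₂.det := ha₂ ▸ isUnit_one
  have hdet_inv₂ : a₂⁻¹.det = 1 := by rw [det_nonsing_inv, ha₂, Ring.inverse_one]
  have htr_inv₂ : a₂⁻¹.trace = t₂ := by
    rw [inv_fin_two_of_det_eq_one ha₂, trace_fin_two_of, ← ht₂, trace_fin_two, add_comm]
  constructor
  · intro h
    have hl0 : l ≠ 0 := by
      rintro rfl
      simpa [det_mul, ha₁, ha₂] using congrArg det h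
    have hdiag₂ : trace (!![l, 0; 0, l⁻¹] * a₂⁻¹⁻¹) = trace a₂⁻¹⁻¹ := by
      rw [nonsing_inv_nonsing_inv _ hu₂]
      exact trace_mul_eq_of_commutator_eq hu₁ hu₂ h
    obtain ⟨μ, hμ, rfl⟩ := exists_eq_hMat hl0 hl hδ₁ ha₁ ht₁
      (apply_zero_zero_eq_of_trace_diag_mul_inv hl0 hl1 ha₁
        (trace_mul_inv_eq_of_commutator_eq hu₁ hu₂ h))
    obtain ⟨ν, hν, hν'⟩ := exists_eq_hMat hl0 hl hδ₂ hdet_inv₂ htr_inv₂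
      (apply_zero_zero_eq_of_trace_diag_mul_inv hl0 hl1 hdet_inv₂ hdiag₂)
    refine ⟨μ, ν, hμ, hν, rfl, hν', (hMat_commutator_eq_diag_iff hl0 hl hμ hν).1 ?_⟩
    rwa [← hν', nonsing_inv_nonsing_inv _ hu₂]
  · rintro ⟨μ, ν, hμ, hν, rfl, hν', hrel⟩
    have hl0 : l ≠ 0 := by
      rintro rfl
      simp [hMat, det_fin_two_of] at ha₁
    have ha₂' : a₂ = (hMat t₂ l ν)⁻¹ := by rw [← hν', nonsing_inv_nonsing_inv _ hu₂]
    rw [hν', ha₂']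
    exact (hMat_commutator_eq_diag_iff hl0 hl hμ hν).2 hrel
end

section
/- Let a₁, a₂ ∈ SL(2,ℂ). If the commutator a₁a₂a₁⁻¹a₂⁻¹ equals p = [[1,1],[0,1]], then both a₁ and a₂ are upper-triangular. -/
open Matrix

theorem commutator_parabolic (a₁ a₂ : Matrix (Fin 2) (Fin 2) ℂ)
    (ha₁ : a₁.det = 1) (ha₂ : a₂.det = 1)
    (h : a₁ * a₂ * a₁⁻¹ * a₂⁻¹ = !![1, 1; 0, 1]) :
    a₁ 1 0 = 0 ∧ a₂ 1 0 = 0 := by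
  have u1 : IsUnit a₁.det := by simp [ha₁]
  have u2 : IsUnit a₂.det := by simp [ha₂]
  have h2 : a₁ * a₂ = !![(1:ℂ), 1; 0, 1] * a₂ * a₁ := by
    have := congrArg (fun M => M * a₂ * a₁) h
    rw [Matrix.nonsing_inv_mul_cancel_right _ _ u2,
        Matrix.nonsing_inv_mul_cancel_right _ _ u1] at this
    exact this
  set a := a₁ 0 0 with hA
  set b := a₁ 0 1 with hB
  set c := a₁ 1 0 with hC
  set d := a₁ 1 1 with hD
  set e := a₂ 0 0 with hE
  set f := a₂ 0 1 with hF
  set g := a₂ 1 0 with hG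
  set k := a₂ 1 1 with hK
  have E00 := congrFun (congrFun h2 0) 0
  have E01 := congrFun (congrFun h2 0) 1
  have E10 := congrFun (congrFun h2 1) 0
  have E11 := congrFun (congrFun h2 1) 1
  simp [Matrix.mul_apply, Matrix.vecMul, dotProduct, Fin.sum_univ_two, Matrix.cons_val_zero, Matrix.cons_val_one, Matrix.head_cons] at E00 E01 E10 E11
  rw [Matrix.det_fin_two] at ha₁ ha₂
  have star : a * g + c * k = 0 := by linear_combination -E00 - E11
  have hg : g = 0 := by
    linear_combination c * E01 + (d - a) * E11 + d * star + b * E10 - g * ha₁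
  have hck : c * k = 0 := by linear_combination star - a * hg
  have hce : c * e = 0 := by linear_combination E10 + (a - d) * hg + hck
  have hcf : c * f = 0 := by linear_combination E11 + b * hg
  have hc2 : c * c = 0 := by
    linear_combination (-(c*c)) * ha₂ + (c*e) * hck - (c*g) * hcf
  exact ⟨mul_self_eq_zero.mp hc2, hg⟩
end

section
/- Let a₁, a₂ ∈ SL(2,ℂ). Then the commutator a₁a₂a₁⁻¹a₂⁻¹ equals -1 (minus the identity matrix) if and only if tr(a₁) = tr(a₂) = tr(a₁a₂) = 0. -/
open Matrix

theorem commutator_neg_one_iff (a₁ a₂ : Matrix (Fin 2) (Fin 2) ℂ)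
    (ha₁ : a₁.det = 1) (ha₂ : a₂.det = 1) :
    a₁ * a₂ * a₁⁻¹ * a₂⁻¹ = -1 ↔
      a₁.trace = 0 ∧ a₂.trace = 0 ∧ (a₁ * a₂).trace = 0 := by
  have hA : IsUnit a₁.det := by simp [ha₁]
  have hB : IsUnit a₂.det := by simp [ha₂]
  have key : a₁ * a₂ * a₁⁻¹ * a₂⁻¹ = -1 ↔ a₁ * a₂ + a₂ * a₁ = 0 := by
    constructor
    · intro h
      have h2 : a₁ * a₂ * a₁⁻¹ * a₂⁻¹ * a₂ * a₁ = -1 * a₂ * a₁ := by rw [h]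
      have h3 : a₁ * a₂ = -(a₂ * a₁) := by
        calc a₁ * a₂ = a₁ * a₂ * a₁⁻¹ * a₂⁻¹ * a₂ * a₁ := by
              simp [Matrix.mul_assoc, Matrix.nonsing_inv_mul_cancel_left _ _ hB,
                Matrix.nonsing_inv_mul_cancel_left _ _ hA,
                Matrix.mul_nonsing_inv _ hA, Matrix.mul_nonsing_inv _ hB,
                Matrix.nonsing_inv_mul _ hA, Matrix.nonsing_inv_mul _ hB]
          _ = -(a₂ * a₁) := by rw [h2]; noncomm_ring
      rw [h3]; abel
    · intro h
      have h' : a₁ * a₂ = -(a₂ * a₁) := by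
        have := eq_neg_of_add_eq_zero_left h; exact this
      rw [h']
      calc -(a₂ * a₁) * a₁⁻¹ * a₂⁻¹ = -(a₂ * (a₁ * a₁⁻¹) * a₂⁻¹) := by noncomm_ring
        _ = -1 := by rw [Matrix.mul_nonsing_inv _ hA]; simp [Matrix.mul_nonsing_inv _ hB]
  rw [key]
  rw [show (a₁ * a₂ + a₂ * a₁ = 0) ↔ ∀ i j, (a₁ * a₂ + a₂ * a₁) i j = (0 : Matrix (Fin 2) (Fin 2) ℂ) i j from Matrix.ext_iff.symm]
  simp only [Fin.forall_fin_two, Matrix.add_apply, Matrix.mul_apply, Fin.sum_univ_two,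
    Matrix.zero_apply, Matrix.trace_fin_two, Matrix.det_fin_two] at *
  set a := a₁ 0 0 with hadef
  set b := a₁ 0 1
  set c := a₁ 1 0
  set d := a₁ 1 1
  set e := a₂ 0 0
  set f := a₂ 0 1
  set g := a₂ 1 0
  set h := a₂ 1 1
  constructor
  · rintro ⟨⟨h00, h01⟩, h10, h11⟩
    have h1 : a * e = d * h := by linear_combination (h00 - h11) / 2
    have hT : a * e + b * g + (c * f + d * h) = 0 := by linear_combination (h00 + h11) / 2
    have h2 : (a + d) * f + (e + h) * b = 0 := by linear_combination h01
    have h3 : (a + d) * g + (e + h) * c = 0 := by linear_combination h10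
    have hte : (a + d) * e = (e + h) * d := by linear_combination h1
    have hth : (a + d) * h = (e + h) * a := by linear_combination -h1
    have hts : (a + d) ^ 2 = (e + h) ^ 2 := by
      linear_combination ((a + d) * h) * hte + ((e + h) * d) * hth
        - ((a + d) * g) * h2 + ((e + h) * b) * h3 - (a + d) ^ 2 * ha₂ + (e + h) ^ 2 * ha₁
    have hs : e + h = 0 := by
      linear_combination ((d - a) * h1 - c * h2 - b * h3 + (a + d) * hT
        - 2 * (e + h) * ha₁) / 2
    have ht : a + d = 0 := by
      have : (a + d) ^ 2 = 0 := by rw [hts, hs]; ring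
      exact pow_eq_zero_iff two_ne_zero |>.mp this
    exact ⟨ht, hs, hT⟩
  · rintro ⟨ht, hs, hT⟩
    refine ⟨⟨?_, ?_⟩, ?_, ?_⟩
    · linear_combination hT + a * hs - h * ht
    · linear_combination f * ht + b * hs
    · linear_combination g * ht + c * hs
    · linear_combination hT - a * hs + h * ht
end

section
/- Let a₁, a₂ ∈ SL(2,ℂ). Then tr(a₁a₂a₁⁻¹a₂⁻¹) = 2 if and only if a₁ and a₂ have a common eigenvector, i.e., there exists a nonzero vector v ∈ ℂ² and scalars c₁, c₂ with a₁v = c₁v and a₂v = c₂v. -/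
/-!
For `A, B ∈ SL₂` one has `AB - BA = (ABA⁻¹B⁻¹ - 1) BA`, and `det (M - 1) = 2 - tr M` for
`M ∈ SL₂`, so `tr (ABA⁻¹B⁻¹) = 2 - det (AB - BA)`. A common eigenvector lies in the kernel of
`C = AB - BA`, forcing `det C = 0`. Conversely, Cayley–Hamilton gives `AC + CA = (tr A) C` and
`BC + CB = (tr B) C`, so the nonzero subspace `ker C` is invariant under `A` and `B`, which
commute on it; commuting operators on a nonzero space over `ℂ` have a common eigenvector.
-/

open Matrix Polynomial

namespace Module.End

variable {K V : Type*} [Field K] [IsAlgClosed K] [AddCommGroup V] [Module K V]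
  [FiniteDimensional K V]

theorem exists_common_eigenvector_of_commute [Nontrivial V] {f g : End K V}
    (hfg : Commute f g) : ∃ v ≠ 0, ∃ a b : K, f v = a • v ∧ g v = b • v := by
  obtain ⟨a, ha⟩ := f.exists_eigenvalue
  have : Nontrivial (f.eigenspace a) := Submodule.nontrivial_iff_ne_bot.mpr ha
  obtain ⟨b, hb⟩ := exists_eigenvalue (g.restrict (mapsTo_genEigenspace_of_comm hfg a 1))
  obtain ⟨⟨v, hva⟩, hvb, hv0⟩ := hb.exists_hasEigenvector
  exact ⟨v, by simpa using hv0, a, b, mem_eigenspace_iff.mp hva,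
    congrArg Subtype.val (mem_eigenspace_iff.mp hvb)⟩

theorem exists_common_eigenvector_of_commute_on {f g : End K V} {W : Submodule K V}
    (hW : W ≠ ⊥) (hf : Set.MapsTo f W W) (hg : Set.MapsTo g W W)
    (hfg : ∀ w ∈ W, f (g w) = g (f w)) : ∃ v ≠ 0, ∃ a b : K, f v = a • v ∧ g v = b • v := by
  have : Nontrivial W := Submodule.nontrivial_iff_ne_bot.mpr hW
  have hcomm : Commute (f.restrict hf) (g.restrict hg) :=
    LinearMap.ext fun w => Subtype.ext (hfg w w.2)
  obtain ⟨⟨v, _⟩, hv0, a, b, hfv, hgv⟩ := exists_common_eigenvector_of_commute hcomm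
  exact ⟨v, by simpa using hv0, a, b, congrArg Subtype.val hfv, congrArg Subtype.val hgv⟩

end Module.End

namespace Matrix

variable {R : Type*} [CommRing R]

theorem sq_fin_two (M : Matrix (Fin 2) (Fin 2) R) : M ^ 2 = M.trace • M - M.det • 1 := by
  nontriviality R
  have hCH := aeval_self_charpoly M
  simp only [charpoly_fin_two, map_add, map_sub, map_pow, aeval_X, aeval_C, map_mul,
    Algebra.algebraMap_eq_smul_one, smul_mul_assoc, Matrix.one_mul] at hCH
  rw [← sub_eq_zero, ← hCH]
  abel

theorem det_sub_one_fin_two (M : Matrix (Fin 2) (Fin 2) R) :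
    (M - 1).det = M.det - M.trace + 1 := by
  simp only [det_fin_two, trace_fin_two, Matrix.sub_apply, one_apply_eq, one_apply_ne, ne_eq,
    zero_ne_one, one_ne_zero, not_false_eq_true, sub_zero]
  ring

theorem mul_commutator_add_commutator_mul_fin_two (A B : Matrix (Fin 2) (Fin 2) R) :
    A * (A * B - B * A) + (A * B - B * A) * A = A.trace • (A * B - B * A) := by
  calc A * (A * B - B * A) + (A * B - B * A) * A = A ^ 2 * B - B * A ^ 2 := by noncomm_ring
    _ = A.trace • (A * B - B * A) := by
      rw [sq_fin_two]
      simp only [sub_mul, mul_sub, smul_mul_assoc, mul_smul_comm, Matrix.one_mul,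
        Matrix.mul_one, smul_sub]
      abel

theorem trace_commutator_fin_two {A B : Matrix (Fin 2) (Fin 2) R} (hA : A.det = 1)
    (hB : B.det = 1) : (A * B * A⁻¹ * B⁻¹).trace = 2 - (A * B - B * A).det := by
  have hA' : IsUnit A.det := hA ▸ isUnit_one
  have hB' : IsUnit B.det := hB ▸ isUnit_one
  have hfactor : A * B - B * A = (A * B * A⁻¹ * B⁻¹ - 1) * (B * A) := by
    simp [sub_mul, Matrix.mul_assoc, nonsing_inv_mul _ hA', nonsing_inv_mul_cancel_left _ _ hB']
  rw [hfactor, det_mul, det_sub_one_fin_two]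
  simp only [det_mul, hA, hB, mul_one, det_nonsing_inv, Ring.inverse_one]
  ring

theorem det_commutator_eq_zero_of_common_eigenvector {n : Type*} [Fintype n] [DecidableEq n]
    [IsDomain R] {A B : Matrix n n R} {v : n → R} (hv : v ≠ 0) {c₁ c₂ : R}
    (h₁ : A *ᵥ v = c₁ • v) (h₂ : B *ᵥ v = c₂ • v) : (A * B - B * A).det = 0 :=
  exists_mulVec_eq_zero_iff.mp ⟨v, hv, by
    simp [sub_mulVec, ← mulVec_mulVec, h₁, h₂, mulVec_smul, smul_smul, mul_comm]⟩

theorem mapsTo_ker_toLin'_of_mul_add_mul_eq_smul {n : Type*} [Fintype n] [DecidableEq n]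
    {M C : Matrix n n R} {t : R} (h : M * C + C * M = t • C) :
    Set.MapsTo (toLin' M) (LinearMap.ker (toLin' C)) (LinearMap.ker (toLin' C)) := by
  intro v hv
  simp only [SetLike.mem_coe, LinearMap.mem_ker, toLin'_apply] at hv ⊢
  rw [mulVec_mulVec, eq_sub_of_add_eq' h, sub_mulVec, smul_mulVec, ← mulVec_mulVec, hv]
  simp

theorem exists_common_eigenvector_of_det_commutator_eq_zero {K : Type*} [Field K]
    [IsAlgClosed K] {A B : Matrix (Fin 2) (Fin 2) K} (h : (A * B - B * A).det = 0) :
    ∃ v ≠ 0, ∃ c₁ c₂ : K, A *ᵥ v = c₁ • v ∧ B *ᵥ v = c₂ • v := by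
  obtain ⟨v, hv0, hv⟩ := exists_mulVec_eq_zero_iff.mpr h
  have hker : LinearMap.ker (toLin' (A * B - B * A)) ≠ ⊥ :=
    (Submodule.ne_bot_iff _).mpr ⟨v, by rwa [LinearMap.mem_ker, toLin'_apply], hv0⟩
  have hB : B * (A * B - B * A) + (A * B - B * A) * B = B.trace • (A * B - B * A) := by
    have hBA := mul_commutator_add_commutator_mul_fin_two B A
    rwa [← neg_sub (A * B), mul_neg, neg_mul, ← neg_add, smul_neg, neg_inj] at hBA
  simpa only [toLin'_apply] using Module.End.exists_common_eigenvector_of_commute_on hker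
    (mapsTo_ker_toLin'_of_mul_add_mul_eq_smul (mul_commutator_add_commutator_mul_fin_two A B))
    (mapsTo_ker_toLin'_of_mul_add_mul_eq_smul hB)
    fun w hw => by
      rw [LinearMap.mem_ker, toLin'_apply, sub_mulVec, sub_eq_zero, ← mulVec_mulVec,
        ← mulVec_mulVec] at hw
      simpa only [toLin'_apply] using hw

end Matrix

theorem commutator_trace_two_iff (a₁ a₂ : Matrix (Fin 2) (Fin 2) ℂ)
    (ha₁ : a₁.det = 1) (ha₂ : a₂.det = 1) :
    (a₁ * a₂ * a₁⁻¹ * a₂⁻¹).trace = 2 ↔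
      ∃ v : Fin 2 → ℂ, v ≠ 0 ∧ ∃ c₁ c₂ : ℂ,
        a₁.mulVec v = c₁ • v ∧ a₂.mulVec v = c₂ • v := by
  rw [trace_commutator_fin_two ha₁ ha₂, sub_eq_self]
  exact ⟨exists_common_eigenvector_of_det_commutator_eq_zero,
    fun ⟨v, hv, c₁, c₂, h₁, h₂⟩ => det_commutator_eq_zero_of_common_eigenvector hv h₁ h₂⟩
end

section
/- Suppose x₁, x₂, x₃ ∈ SL(2,ℂ) satisfy x₂ commutes with [x₃, x₁⁻¹] and x₃ commutes with [x₁, x₂⁻¹], where [a,b] = aba⁻¹b⁻¹. Then x₁ commutes with [x₂, x₃⁻¹]. -/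
open Matrix

theorem borromean_group {G : Type*} [Group G] (a b c : G)
    (h1 : b * (c * a⁻¹ * c⁻¹ * a) = (c * a⁻¹ * c⁻¹ * a) * b)
    (h2 : c * (a * b⁻¹ * a⁻¹ * b) = (a * b⁻¹ * a⁻¹ * b) * c) :
    a * (b * c⁻¹ * b⁻¹ * c) = (b * c⁻¹ * b⁻¹ * c) * a := by
  have H1 : Commute b (c * a⁻¹ * c⁻¹ * a) := h1
  have H2 : Commute c (a * b⁻¹ * a⁻¹ * b) := h2
  have e1 : (c * a⁻¹ * c⁻¹ * a) * b⁻¹ * (c * a⁻¹ * c⁻¹ * a)⁻¹ * b = 1 := by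
    rw [← H1.inv_left]; group
  have e2 : (a * b⁻¹ * a⁻¹ * b) * c⁻¹ * (a * b⁻¹ * a⁻¹ * b)⁻¹ * c = 1 := by
    rw [← H2.inv_left]; group
  have hw : (b⁻¹ * ((b * c⁻¹ * b⁻¹ * c) * a⁻¹ * (b * c⁻¹ * b⁻¹ * c)⁻¹ * a) * b) *
      (a⁻¹ * ((a * b⁻¹ * a⁻¹ * b) * c⁻¹ * (a * b⁻¹ * a⁻¹ * b)⁻¹ * c) * a) *
      (c⁻¹ * ((c * a⁻¹ * c⁻¹ * a) * b⁻¹ * (c * a⁻¹ * c⁻¹ * a)⁻¹ * b) * c) = 1 := by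
    group
  rw [e1, e2] at hw
  have hx : (b * c⁻¹ * b⁻¹ * c) * a⁻¹ * (b * c⁻¹ * b⁻¹ * c)⁻¹ * a = 1 := by
    have : (b * c⁻¹ * b⁻¹ * c) * a⁻¹ * (b * c⁻¹ * b⁻¹ * c)⁻¹ * a =
        b * ((b⁻¹ * ((b * c⁻¹ * b⁻¹ * c) * a⁻¹ * (b * c⁻¹ * b⁻¹ * c)⁻¹ * a) * b) *
          (a⁻¹ * 1 * a) * (c⁻¹ * 1 * c)) * b⁻¹ := by group
    rw [this, hw]; group
  have hx' : (b * c⁻¹ * b⁻¹ * c) * a⁻¹ * (b * c⁻¹ * b⁻¹ * c)⁻¹ = a⁻¹ := by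
    have := mul_eq_one_iff_eq_inv.mp hx
    simpa using this
  have step : a * ((b * c⁻¹ * b⁻¹ * c) * a⁻¹ * (b * c⁻¹ * b⁻¹ * c)⁻¹) *
      (b * c⁻¹ * b⁻¹ * c) * a = a * (b * c⁻¹ * b⁻¹ * c) := by group
  calc a * (b * c⁻¹ * b⁻¹ * c) = a * ((b * c⁻¹ * b⁻¹ * c) * a⁻¹ * (b * c⁻¹ * b⁻¹ * c)⁻¹) *
      (b * c⁻¹ * b⁻¹ * c) * a := step.symm
    _ = a * a⁻¹ * (b * c⁻¹ * b⁻¹ * c) * a := by rw [hx']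
    _ = (b * c⁻¹ * b⁻¹ * c) * a := by group

theorem borromean_third_relation (x₁ x₂ x₃ : Matrix (Fin 2) (Fin 2) ℂ)
    (h₁ : x₁.det = 1) (h₂ : x₂.det = 1) (h₃ : x₃.det = 1)
    (c₁ : x₂ * (x₃ * x₁⁻¹ * x₃⁻¹ * x₁) = (x₃ * x₁⁻¹ * x₃⁻¹ * x₁) * x₂)
    (c₂ : x₃ * (x₁ * x₂⁻¹ * x₁⁻¹ * x₂) = (x₁ * x₂⁻¹ * x₁⁻¹ * x₂) * x₃) :
    x₁ * (x₂ * x₃⁻¹ * x₂⁻¹ * x₃) = (x₂ * x₃⁻¹ * x₂⁻¹ * x₃) * x₁ := by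
  have hu₁ : IsUnit x₁ := (Matrix.isUnit_iff_isUnit_det x₁).mpr (by simp [h₁])
  have hu₂ : IsUnit x₂ := (Matrix.isUnit_iff_isUnit_det x₂).mpr (by simp [h₂])
  have hu₃ : IsUnit x₃ := (Matrix.isUnit_iff_isUnit_det x₃).mpr (by simp [h₃])
  obtain ⟨u₁, rfl⟩ := hu₁
  obtain ⟨u₂, rfl⟩ := hu₂
  obtain ⟨u₃, rfl⟩ := hu₃
  simp only [← Matrix.coe_units_inv, ← Units.val_mul] at c₁ c₂ ⊢
  exact congrArg Units.val (borromean_group u₁ u₂ u₃ (Units.ext c₁) (Units.ext c₂))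
end
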